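/- arXiv:2312.04182 — 4 statements merged into one kernel-verified Lean document; each statement's English description precedes it below -/
import Mathlib

section
/- Fix 0 < β_P < β_U, α ∈ (0,1), 0 < γ < α β_P, L > 0, C_P > 0. Define y_EE(1, z_Ī; μ_S) := 1 − γ/((β_P + (β_U−β_P)z_Ī)(α + (1−α)(μ_S + z_Ī(1−μ_S)))) and h(z_Ī, μ_S) := (1−α)·L·(β_P + (β_U−β_P)z_Ī)·y_EE(1, z_Ī; μ_S) − C_P. Then h is monotonically nondecreasing in z_Ī ∈ [0,1] for each fixed μ_S ∈ [0,1], and monotonically nondecreasing in μ_S ∈ [0,1] for each fixed z_Ī ∈ [0,1]. -/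
lemma stmt_5_key (c γ B M B' M' : ℝ) (hc : 0 ≤ c) (hγ : 0 < γ)
    (hB : 0 < B) (hBB : B ≤ B') (hM : 0 < M) (hMM : M ≤ M') :
    c * B * (1 - γ / (B * M)) ≤ c * B' * (1 - γ / (B' * M')) := by
  have hB' : 0 < B' := lt_of_lt_of_le hB hBB
  have hM' : 0 < M' := lt_of_lt_of_le hM hMM
  have e1 : c * B * (1 - γ / (B * M)) = c * (B - γ / M) := by
    field_simp
  have e2 : c * B' * (1 - γ / (B' * M')) = c * (B' - γ / M') := by
    field_simp
  rw [e1, e2]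
  apply mul_le_mul_of_nonneg_left _ hc
  have h1 : γ / M' ≤ γ / M := div_le_div_of_nonneg_left hγ.le hM hMM
  linarith

theorem stmt_5 (βP βU α γ L CP : ℝ) (hβP : 0 < βP) (hββ : βP < βU)
    (hα : α ∈ Set.Ioo (0:ℝ) 1) (hγ0 : 0 < γ) (hγ : γ < α * βP)
    (hL : 0 < L) (hCP : 0 < CP) :
    (∀ μS zI zI' : ℝ, μS ∈ Set.Icc (0:ℝ) 1 → zI ∈ Set.Icc (0:ℝ) 1 →
      zI' ∈ Set.Icc (0:ℝ) 1 → zI ≤ zI' →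
      (1 - α) * L * (βP + (βU - βP) * zI) *
        (1 - γ / ((βP + (βU - βP) * zI) * (α + (1 - α) * (μS + zI * (1 - μS))))) - CP ≤
      (1 - α) * L * (βP + (βU - βP) * zI') *
        (1 - γ / ((βP + (βU - βP) * zI') * (α + (1 - α) * (μS + zI' * (1 - μS))))) - CP) ∧
    (∀ zI μS μS' : ℝ, zI ∈ Set.Icc (0:ℝ) 1 → μS ∈ Set.Icc (0:ℝ) 1 →
      μS' ∈ Set.Icc (0:ℝ) 1 → μS ≤ μS' →
      (1 - α) * L * (βP + (βU - βP) * zI) *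
        (1 - γ / ((βP + (βU - βP) * zI) * (α + (1 - α) * (μS + zI * (1 - μS))))) - CP ≤
      (1 - α) * L * (βP + (βU - βP) * zI) *
        (1 - γ / ((βP + (βU - βP) * zI) * (α + (1 - α) * (μS' + zI * (1 - μS'))))) - CP) := by
  obtain ⟨hα0, hα1⟩ := hα
  have hc : 0 ≤ (1 - α) * L := by nlinarith
  constructor
  · intro μS zI zI' hμ hz hz' hle
    obtain ⟨hμ0, hμ1⟩ := hμ
    obtain ⟨hz0, hz1⟩ := hz
    obtain ⟨hz'0, hz'1⟩ := hz'
    have := stmt_5_key ((1 - α) * L) γ (βP + (βU - βP) * zI)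
      (α + (1 - α) * (μS + zI * (1 - μS))) (βP + (βU - βP) * zI')
      (α + (1 - α) * (μS + zI' * (1 - μS))) hc hγ0
      (by nlinarith) (by nlinarith)
      (by nlinarith [mul_nonneg (mul_nonneg (by linarith : (0:ℝ) ≤ 1 - α) hz0) (by linarith : (0:ℝ) ≤ 1 - μS), mul_nonneg (by linarith : (0:ℝ) ≤ 1 - α) hμ0])
      (by nlinarith [mul_nonneg (mul_nonneg (by linarith : (0:ℝ) ≤ 1 - α) (by linarith : (0:ℝ) ≤ zI' - zI)) (by linarith : (0:ℝ) ≤ 1 - μS)])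
    linarith
  · intro zI μS μS' hz hμ hμ' hle
    obtain ⟨hμ0, hμ1⟩ := hμ
    obtain ⟨hμ'0, hμ'1⟩ := hμ'
    obtain ⟨hz0, hz1⟩ := hz
    have := stmt_5_key ((1 - α) * L) γ (βP + (βU - βP) * zI)
      (α + (1 - α) * (μS + zI * (1 - μS))) (βP + (βU - βP) * zI)
      (α + (1 - α) * (μS' + zI * (1 - μS'))) hc hγ0
      (by nlinarith) (le_refl _)
      (by nlinarith [mul_nonneg (mul_nonneg (by linarith : (0:ℝ) ≤ 1 - α) hz0) (by linarith : (0:ℝ) ≤ 1 - μS), mul_nonneg (by linarith : (0:ℝ) ≤ 1 - α) hμ0])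
      (by nlinarith [mul_nonneg (mul_nonneg (by linarith : (0:ℝ) ≤ 1 - α) (by linarith : (0:ℝ) ≤ μS' - μS)) (by linarith : (0:ℝ) ≤ 1 - zI)])
    linarith
end

section
/- Fix 0 < β_P < β_U, α ∈ (0,1), 0 < γ < α β_P, L > 0, 0 < C_P < C_U, and z_Ī ∈ [0,1]. With y(μ_S) := y_EE(1, z_Ī; μ_S), h(μ_S) := (1−α)L(β_P + (β_U−β_P)z_Ī)y(μ_S) − C_P, and g(μ_S) := y(μ_S)(C_U − C_P) − (1−μ_S)(1−y(μ_S))(−h(μ_S)): on any interval of μ_S ∈ [0,1] where h(μ_S) < 0, the function g is monotonically increasing in μ_S. -/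
noncomputable def yEE7 (βP βU α γ zI μS : ℝ) : ℝ :=
  1 - γ / ((βP + (βU - βP) * zI) * (α + (1 - α) * (μS + zI * (1 - μS))))

noncomputable def h7 (βP βU α γ L CP zI μS : ℝ) : ℝ :=
  (1 - α) * L * (βP + (βU - βP) * zI) * yEE7 βP βU α γ zI μS - CP

noncomputable def g7 (βP βU α γ L CP CU zI μS : ℝ) : ℝ :=
  yEE7 βP βU α γ zI μS * (CU - CP)
    - (1 - μS) * (1 - yEE7 βP βU α γ zI μS) * (-(h7 βP βU α γ L CP zI μS))

/-!
Write `β = βP + (βU - βP) zI`, `D μ = α + (1 - α)(μ + zI (1 - μ))` and `c = (1 - α) L β ≥ 0`, so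
that `y = 1 - γ / (β D)` and `h = c y - CP`. Since `D` is nondecreasing and positive on `[0, 1]`,
`y` is nondecreasing and `y < 1`, hence `-h` is nonincreasing. Where `-h > 0` the subtracted term
`(1 - μ)(1 - y)(-h)` of `g` is a product of positive nonincreasing factors whose first factor
strictly decreases, while `y (CU - CP)` does not decrease.
-/

lemma mix_pos {α z μ : ℝ} (hα0 : 0 < α) (hα1 : α ≤ 1) (hz : 0 ≤ z)
    (hμ : μ ∈ Set.Icc (0 : ℝ) 1) :
    0 < α + (1 - α) * (μ + z * (1 - μ)) := by
  have : 0 ≤ μ + z * (1 - μ) := add_nonneg hμ.1 (mul_nonneg hz (sub_nonneg.2 hμ.2))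
  nlinarith

lemma mix_mono {α z μ μ' : ℝ} (hα1 : α ≤ 1) (hz : z ≤ 1) (hμ : μ ≤ μ') :
    α + (1 - α) * (μ + z * (1 - μ)) ≤ α + (1 - α) * (μ' + z * (1 - μ')) := by
  have : 0 ≤ (1 - α) * ((1 - z) * (μ' - μ)) :=
    mul_nonneg (sub_nonneg.2 hα1) (mul_nonneg (sub_nonneg.2 hz) (sub_nonneg.2 hμ))
  linarith

section

variable {βP βU α γ L CP zI : ℝ}

lemma yEE7_lt_one (hβ : 0 < βP + (βU - βP) * zI) (hα : α ∈ Set.Ioo (0 : ℝ) 1)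
    (hγ : 0 < γ) (hzI : 0 ≤ zI) {μ : ℝ} (hμ : μ ∈ Set.Icc (0 : ℝ) 1) : yEE7 βP βU α γ zI μ < 1 :=
  sub_lt_self _ (div_pos hγ (mul_pos hβ (mix_pos hα.1 hα.2.le hzI hμ)))

lemma yEE7_le_yEE7 (hβ : 0 < βP + (βU - βP) * zI) (hα : α ∈ Set.Ioo (0 : ℝ) 1)
    (hγ : 0 ≤ γ) (hzI : zI ∈ Set.Icc (0 : ℝ) 1) {μ μ' : ℝ} (hμ : μ ∈ Set.Icc (0 : ℝ) 1)
    (hμμ' : μ ≤ μ') :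
    yEE7 βP βU α γ zI μ ≤ yEE7 βP βU α γ zI μ' :=
  sub_le_sub_left
    (div_le_div_of_nonneg_left hγ (mul_pos hβ (mix_pos hα.1 hα.2.le hzI.1 hμ))
      (mul_le_mul_of_nonneg_left (mix_mono hα.2.le hzI.2 hμμ') hβ.le)) 1

lemma h7_le_h7 (hβ : 0 ≤ βP + (βU - βP) * zI) (hα : α ≤ 1) (hL : 0 ≤ L) {μ μ' : ℝ}
    (hy : yEE7 βP βU α γ zI μ ≤ yEE7 βP βU α γ zI μ') :
    h7 βP βU α γ L CP zI μ ≤ h7 βP βU α γ L CP zI μ' :=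
  sub_le_sub_right
    (mul_le_mul_of_nonneg_left hy (mul_nonneg (mul_nonneg (sub_nonneg.2 hα) hL) hβ)) CP

end

lemma mul_sub_mul_lt_mul_sub_mul {a y y' μ μ' p p' : ℝ} (ha : 0 ≤ a) (hy : y ≤ y')
    (hy' : y' < 1) (hμ : μ < μ') (hμ' : μ' ≤ 1) (hp' : 0 < p') (hp : p' ≤ p) :
    y * a - (1 - μ) * (1 - y) * p < y' * a - (1 - μ') * (1 - y') * p' := by
  have hya : y * a ≤ y' * a := mul_le_mul_of_nonneg_right hy ha
  have hpos : 0 < (1 - y) * p := mul_pos (by linarith) (hp'.trans_le hp)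
  calc y * a - (1 - μ) * (1 - y) * p
      < y' * a - (1 - μ') * ((1 - y) * p) := by
        linarith [mul_lt_mul_of_pos_right (sub_lt_sub_left hμ 1) hpos]
    _ ≤ y' * a - (1 - μ') * ((1 - y') * p') := by
        gcongr
        linarith
    _ = y' * a - (1 - μ') * (1 - y') * p' := by ring

theorem stmt_7_general (βP βU α γ L CP CU zI : ℝ) (hβP : 0 < βP) (hββ : βP < βU)
    (hα : α ∈ Set.Ioo (0:ℝ) 1) (hγ0 : 0 < γ)
    (hL : 0 < L) (hCPU : CP < CU) (hzI : zI ∈ Set.Icc (0:ℝ) 1) :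
    ∀ μS μS' : ℝ, μS ∈ Set.Icc (0:ℝ) 1 → μS' ∈ Set.Icc (0:ℝ) 1 → μS < μS' →
      h7 βP βU α γ L CP zI μS < 0 → h7 βP βU α γ L CP zI μS' < 0 →
      g7 βP βU α γ L CP CU zI μS < g7 βP βU α γ L CP CU zI μS' := by
  intro μS μS' hμS hμS' hlt hh hh'
  have hβ : 0 < βP + (βU - βP) * zI :=
    add_pos_of_pos_of_nonneg hβP (mul_nonneg (sub_nonneg.2 hββ.le) hzI.1)
  have hy := yEE7_le_yEE7 hβ hα hγ0.le hzI hμS hlt.le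
  exact mul_sub_mul_lt_mul_sub_mul (sub_nonneg.2 hCPU.le) hy
    (yEE7_lt_one hβ hα hγ0 hzI.1 hμS') hlt hμS'.2 (neg_pos.2 hh')
    (neg_le_neg (h7_le_h7 hβ.le hα.2.le hL.le hy))

theorem stmt_7 (βP βU α γ L CP CU zI : ℝ) (hβP : 0 < βP) (hββ : βP < βU)
    (hα : α ∈ Set.Ioo (0:ℝ) 1) (hγ0 : 0 < γ) (hγ : γ < α * βP)
    (hL : 0 < L) (hCP : 0 < CP) (hCPU : CP < CU) (hzI : zI ∈ Set.Icc (0:ℝ) 1) :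
    ∀ μS μS' : ℝ, μS ∈ Set.Icc (0:ℝ) 1 → μS' ∈ Set.Icc (0:ℝ) 1 → μS < μS' →
      h7 βP βU α γ L CP zI μS < 0 → h7 βP βU α γ L CP zI μS' < 0 →
      g7 βP βU α γ L CP CU zI μS < g7 βP βU α γ L CP CU zI μS' :=
  stmt_7_general βP βU α γ L CP CU zI hβP hββ hα hγ0 hL hCPU hzI
end

section
/- Fix 0 < β_P < β_U, α ∈ (0,1), 0 < γ < α β_P, L > 0, 0 < C_P < C_U. Define g(z_Ī, μ_S) as in the paper (with y_EE(1, z_Ī; μ_S) = 1 − γ/((β_P+(β_U−β_P)z_Ī)(α+(1−α)(μ_S+z_Ī(1−μ_S))))). Then g(0, 1) > 0. Consequently, if g(0, 0) < 0, there exists a unique μ*_S ∈ (0,1) such that g(0, μ*_S) = 0. -/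
noncomputable def yEE8 (βP βU α γ zI μS : ℝ) : ℝ :=
  1 - γ / ((βP + (βU - βP) * zI) * (α + (1 - α) * (μS + zI * (1 - μS))))

noncomputable def h8 (βP βU α γ L CP zI μS : ℝ) : ℝ :=
  (1 - α) * L * (βP + (βU - βP) * zI) * yEE8 βP βU α γ zI μS - CP

noncomputable def g8 (βP βU α γ L CP CU zI μS : ℝ) : ℝ :=
  yEE8 βP βU α γ zI μS * (CU - CP)
    - (1 - μS) * (1 - yEE8 βP βU α γ zI μS) * (-(h8 βP βU α γ L CP zI μS))

private lemma quadRootEq8 (a2 a1 a0 s t : ℝ) (hs0 : 0 < s) (ht0 : 0 < t)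
    (hs1 : s < 1) (ht1 : t < 1) (ha0 : a0 < 0)
    (hQ1 : 0 < a2 * 1 ^ 2 + a1 * 1 + a0)
    (eQs : a2 * s ^ 2 + a1 * s + a0 = 0)
    (eQt : a2 * t ^ 2 + a1 * t + a0 = 0) : s = t := by
  by_contra hne
  have hsub : s - t ≠ 0 := sub_ne_zero.mpr hne
  have h3 : (s - t) * (a2 * (s + t) + a1) = 0 := by linear_combination eQs - eQt
  have hA : a2 * (s + t) + a1 = 0 := (mul_eq_zero.mp h3).resolve_left hsub
  have hB : a0 = a2 * (s * t) := by linear_combination eQs - s * hA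
  have hst : 0 < s * t := mul_pos hs0 ht0
  have ha2neg : a2 < 0 := by nlinarith
  have hQ1' : a2 * 1 ^ 2 + a1 * 1 + a0 = a2 * ((1 - s) * (1 - t)) := by
    linear_combination hA + hB
  have hpos : (0:ℝ) < (1 - s) * (1 - t) := mul_pos (by linarith) (by linarith)
  nlinarith

theorem stmt_8 (βP βU α γ L CP CU : ℝ) (hβP : 0 < βP) (hββ : βP < βU)
    (hα : α ∈ Set.Ioo (0:ℝ) 1) (hγ0 : 0 < γ) (hγ : γ < α * βP)
    (hL : 0 < L) (hCP : 0 < CP) (hCPU : CP < CU) :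
    0 < g8 βP βU α γ L CP CU 0 1 ∧
    (g8 βP βU α γ L CP CU 0 0 < 0 →
      ∃! μS : ℝ, μS ∈ Set.Ioo (0:ℝ) 1 ∧ g8 βP βU α γ L CP CU 0 μS = 0) := by
  obtain ⟨hα0, hα1⟩ := hα
  have hβPne : βP ≠ 0 := ne_of_gt hβP
  have h1α : (0:ℝ) < 1 - α := by linarith
  -- coefficients of the quadratic Q
  set a2 : ℝ := (1 - α) * (CU - CP) * βP - γ * ((1 - α) * L * βP - CP) with ha2def
  set a1 : ℝ := γ * ((1 - α) * L * βP - CP) + (1 - α) * L * γ ^ 2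
      - (1 - α) * (CU - CP) * γ with ha1def
  set a0 : ℝ := -((1 - α) * L * γ ^ 2) with ha0def
  set Q : ℝ → ℝ := fun t => a2 * t ^ 2 + a1 * t + a0 with hQdef
  have key : ∀ μ : ℝ, α + (1 - α) * μ ≠ 0 →
      g8 βP βU α γ L CP CU 0 μ * ((1 - α) * βP * (α + (1 - α) * μ) ^ 2)
        = Q (α + (1 - α) * μ) := by
    intro μ hne
    simp only [hQdef, ha2def, ha1def, ha0def, g8, yEE8, h8]
    rw [show (βP + (βU - βP) * 0) * (α + (1 - α) * (μ + 0 * (1 - μ))) = βP * (α + (1 - α) * μ) by ring]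
    field_simp
    ring
  -- part 1 : g(1) > 0
  have hy1 : g8 βP βU α γ L CP CU 0 1 = (1 - γ / βP) * (CU - CP) := by
    simp only [g8, yEE8, h8]
    ring
  have hγβP : γ < βP := by nlinarith
  have hg1 : 0 < g8 βP βU α γ L CP CU 0 1 := by
    rw [hy1]
    have : γ / βP < 1 := (div_lt_one hβP).2 hγβP
    have h2 : (0:ℝ) < 1 - γ / βP := by linarith
    exact mul_pos h2 (by linarith)
  refine ⟨hg1, fun hg0 => ?_⟩
  -- Q at 1 is positive
  have h1ne : α + (1 - α) * 1 ≠ 0 := by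
    rw [show α + (1 - α) * 1 = (1:ℝ) by ring]; norm_num
  have e1 := key 1 h1ne
  rw [show α + (1 - α) * 1 = (1:ℝ) by ring] at e1
  have hQ1 : 0 < Q 1 := by
    rw [← e1]
    have : (0:ℝ) < (1 - α) * βP * (1:ℝ) ^ 2 := by nlinarith
    exact mul_pos hg1 this
  -- Q at α is negative
  have hαne : α + (1 - α) * 0 ≠ 0 := by
    rw [show α + (1 - α) * 0 = α by ring]; exact ne_of_gt hα0
  have e0 := key 0 hαne
  rw [show α + (1 - α) * 0 = α by ring] at e0
  have hQα : Q α < 0 := by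
    rw [← e0]
    have hpos : (0:ℝ) < (1 - α) * βP * α ^ 2 := by positivity
    exact mul_neg_of_neg_of_pos hg0 hpos
  -- a0 < 0
  have ha0neg : a0 < 0 := by
    rw [ha0def]; simp only [neg_neg, neg_lt, neg_zero]; positivity
  -- IVT
  have hcont : ContinuousOn Q (Set.Icc α 1) := by
    apply Continuous.continuousOn; fun_prop
  obtain ⟨t, htmem, hQt⟩ := intermediate_value_Ioo (le_of_lt hα1) hcont ⟨hQα, hQ1⟩
  obtain ⟨htα, ht1⟩ := htmem
  have ht0 : 0 < t := lt_trans hα0 htα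
  set μs : ℝ := (t - α) / (1 - α) with hμsdef
  have hμt : α + (1 - α) * μs = t := by
    rw [hμsdef]; field_simp; ring
  have hμsmem : μs ∈ Set.Ioo (0:ℝ) 1 := by
    constructor
    · exact div_pos (by linarith) h1α
    · rw [hμsdef, div_lt_one h1α]; linarith
  have hgμs : g8 βP βU α γ L CP CU 0 μs = 0 := by
    have e := key μs (by rw [hμt]; exact ne_of_gt ht0)
    rw [hμt, hQt] at e
    have hpos : (0:ℝ) < (1 - α) * βP * t ^ 2 := by positivity
    exact (mul_eq_zero.mp e).resolve_right (ne_of_gt hpos)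
  refine ⟨μs, ⟨hμsmem, hgμs⟩, ?_⟩
  rintro y ⟨⟨hy0, hy1'⟩, hgy⟩
  set s : ℝ := α + (1 - α) * y with hsdef
  have hsα : α < s := by
    have := mul_pos h1α hy0
    rw [hsdef]; linarith
  have hs1 : s < 1 := by
    have := mul_lt_mul_of_pos_left hy1' h1α
    rw [hsdef]; linarith
  have hs0 : 0 < s := lt_trans hα0 hsα
  have hQs : Q s = 0 := by
    have e := key y (by rw [← hsdef]; exact ne_of_gt hs0)
    rw [← hsdef, hgy, zero_mul] at e
    exact e.symm
  -- show s = t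
  have hst : s = t := quadRootEq8 a2 a1 a0 s t hs0 ht0 hs1 ht1 ha0neg hQ1 hQs hQt
  -- conclude y = μs
  have : (1 - α) * y = (1 - α) * μs := by
    have := hμt
    rw [← hst] at this
    rw [hsdef] at this
    linarith
  exact mul_left_cancel₀ (ne_of_gt h1α) this
end

section
/- Fix 0 < β_P < β_U, α ∈ (0,1), 0 < γ < α β_P, L > 0, C_P > 0, μ_S ∈ [0,1], and define y*_P := 1 − γ/(αβ_P), y*_INT := C_P/(L(1−α)β_P), and Φ(z_S̄, z_Ī) := (1−α)L(β_P + (β_U−β_P)z_Ī)·y_EE(z_S̄, z_Ī; μ_S) − C_P where y_EE(z_S̄, z_Ī; μ_S) := 1 − γ/((β_P+(β_U−β_P)z_Ī)(α+(1−α)(z_S̄μ_S + z_Ī(1−μ_S)))). Then Φ(0,0) ≥ 0 if and only if y*_P ≥ y*_INT, and if y*_P > y*_INT then Φ(z_S̄, z_Ī) > 0 for all z_S̄, z_Ī ∈ [0,1]. -/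
noncomputable def Phi16 (βP βU α γ L CP μS zS zI : ℝ) : ℝ :=
  (1 - α) * L * (βP + (βU - βP) * zI) *
    (1 - γ / ((βP + (βU - βP) * zI) * (α + (1 - α) * (zS * μS + zI * (1 - μS))))) - CP

theorem stmt_16 (βP βU α γ L CP μS : ℝ) (hβP : 0 < βP) (hββ : βP < βU)
    (hα : α ∈ Set.Ioo (0:ℝ) 1) (hγ0 : 0 < γ) (hγ : γ < α * βP)
    (hL : 0 < L) (hCP : 0 < CP) (hμ : μS ∈ Set.Icc (0:ℝ) 1) :
    (0 ≤ Phi16 βP βU α γ L CP μS 0 0 ↔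
      CP / (L * (1 - α) * βP) ≤ 1 - γ / (α * βP)) ∧
    (CP / (L * (1 - α) * βP) < 1 - γ / (α * βP) →
      ∀ zS zI : ℝ, zS ∈ Set.Icc (0:ℝ) 1 → zI ∈ Set.Icc (0:ℝ) 1 →
        0 < Phi16 βP βU α γ L CP μS zS zI) := by
  obtain ⟨hα0, hα1⟩ := hα
  obtain ⟨hμ0, hμ1⟩ := hμ
  have h1α : (0:ℝ) < 1 - α := by linarith
  have hLβ : 0 < L * (1 - α) * βP := by positivity
  have hα' : α ≠ 0 := ne_of_gt hα0
  have hβP' : βP ≠ 0 := ne_of_gt hβP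
  have e0 : Phi16 βP βU α γ L CP μS 0 0 = (1 - α) * L * (βP - γ / α) - CP := by
    unfold Phi16; simp only [mul_zero, zero_mul, add_zero, sub_zero]; field_simp
  have key : (1 - γ / (α * βP)) * (L * (1 - α) * βP) = (1 - α) * L * (βP - γ / α) := by
    field_simp
  constructor
  · rw [e0, div_le_iff₀ hLβ, key]
    constructor <;> intro h <;> linarith
  · intro h zS zI hzS hzI
    obtain ⟨hzS0, hzS1⟩ := hzS
    obtain ⟨hzI0, hzI1⟩ := hzI
    set B := βP + (βU - βP) * zI with hBdef
    set A := α + (1 - α) * (zS * μS + zI * (1 - μS)) with hAdef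
    have hB : βP ≤ B := by
      have : 0 ≤ (βU - βP) * zI := mul_nonneg (by linarith) hzI0
      simp [hBdef]; linarith
    have hB0 : 0 < B := lt_of_lt_of_le hβP hB
    have hA : α ≤ A := by
      have h1 : 0 ≤ zS * μS := by positivity
      have h2 : 0 ≤ zI * (1 - μS) := mul_nonneg hzI0 (by linarith)
      nlinarith
    have hA0 : 0 < A := lt_of_lt_of_le hα0 hA
    have e : Phi16 βP βU α γ L CP μS zS zI = (1 - α) * L * (B - γ / A) - CP := by
      unfold Phi16
      rw [← hBdef, ← hAdef]
      field_simp
      try ring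
    rw [e]
    have hdiv : γ / A ≤ γ / α := by gcongr γ / ?_
    have hCP' : CP < (1 - α) * L * (βP - γ / α) := by
      rw [div_lt_iff₀ hLβ, key] at h; exact h
    have hmono : (1 - α) * L * (βP - γ / α) ≤ (1 - α) * L * (B - γ / A) :=
      mul_le_mul_of_nonneg_left (by linarith) (le_of_lt (mul_pos h1α hL))
    linarith
end
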